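/- Consider a K-armed stochastic bandit whose arms have i.i.d. rewards in [0,1] with means μ_1, …, μ_K, optimal mean μ* = max_j μ_j, and gaps Δ_j = μ* − μ_j. Run the UCB1 policy: first play each arm once; then at each subsequent round t, play an arm maximizing the index x̄_j(t) + sqrt(2 ln t / N_j(t)). Then the cumulative regret satisfies R_n ≤ Σ_{j : Δ_j > 0} ( 8 ln n / Δ_j + (1 + π²/3)·Δ_j ) for all n ≥ K, and consequently lim_{n→∞} R_n / n = 0, i.e., the UCB1 selection strategy is asymptotically optimal. -/

import Mathlib

/-!
Let `j` be a suboptimal arm with gap `Δ = μ jstar - μ j`. Once `j` has been pulled at least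
`8 log n / Δ²` times, its UCB radius at any round `t ≤ n` is at most `Δ / 2`, so pulling `j`
again at round `t` forces a deviation: for some `s < t`, the mean of the first `s` rewards of
the best arm lies a radius below `μ jstar`, or the mean of the first `s` rewards of `j` lies a
radius above `μ j`. Since `s` is a fixed number of samples rather than the random pull count,
Hoeffding's inequality bounds each of these by `t⁻⁴`; a union bound over `s` leaves `2 / t²` per
round, and `∑ 2 / t² ≤ π² / 3`. Hence `E N_j(n) ≤ 8 log n / Δ² + 1 + π² / 3`, and the regret
identity `R_n = ∑_j Δ_j E N_j(n)` gives the logarithmic bound, hence `R_n / n → 0`.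
-/

open MeasureTheory ProbabilityTheory Filter Finset Real

section PullCount

variable {α : Type*} [DecidableEq α] (i : ℕ → α) (j : α)

def pullCount (t : ℕ) : ℕ := #{s ∈ Icc 1 t | i s = j}

lemma pullCount_le (t : ℕ) : pullCount i j t ≤ t :=
  (card_filter_le _ _).trans (by simp)

lemma pullCount_mono : Monotone (pullCount i j) :=
  fun _ _ h => card_le_card (filter_subset_filter _ (Icc_subset_Icc_right h))

lemma pullCount_eq_pred_add_one_of_eq {t : ℕ} (ht : 1 ≤ t) (h : i t = j) :
    pullCount i j t = pullCount i j (t - 1) + 1 := by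
  rw [pullCount, pullCount, ← insert_Icc_sub_one_right_eq_Icc ht, filter_insert, if_pos h,
    card_insert_of_notMem (by simp; omega)]

lemma strictMonoOn_pullCount_pred :
    StrictMonoOn (fun t => pullCount i j (t - 1)) {t | 1 ≤ t ∧ i t = j} := by
  rintro a ⟨ha, hia⟩ b - hab
  calc pullCount i j (a - 1) < pullCount i j a := by
        rw [pullCount_eq_pred_add_one_of_eq i j ha hia]; omega
    _ ≤ pullCount i j (b - 1) := pullCount_mono i j (by omega)

lemma card_filter_pullCount_pred_lt_le (n L : ℕ) :
    #{t ∈ Icc 1 n | i t = j ∧ pullCount i j (t - 1) < L} ≤ L := by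
  simpa using card_le_card_of_injOn (t := range L) (fun t => pullCount i j (t - 1))
    (fun t ht => by simp_all) ((strictMonoOn_pullCount_pred i j).injOn.mono fun t ht => by
      simp_all)

lemma pullCount_le_add_card_filter (n L : ℕ) :
    pullCount i j n ≤ L + #{t ∈ Icc 1 n | i t = j ∧ L ≤ pullCount i j (t - 1)} := by
  have h := card_filter_add_card_filter_not (s := {t ∈ Icc 1 n | i t = j})
    (fun t => pullCount i j (t - 1) < L)
  simp only [filter_filter, not_lt] at h
  have := card_filter_pullCount_pred_lt_le i j n L
  rw [pullCount]
  omega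

lemma sum_comp_eq_sum_mul_pullCount [Fintype α] (f : α → ℝ) (n : ℕ) :
    ∑ t ∈ Icc 1 n, f (i t) = ∑ k, f k * pullCount i k n := by
  rw [← sum_fiberwise' (Icc 1 n) i f]
  simp [pullCount, mul_comm]

end PullCount

section UCB1

variable {K : ℕ}

def StartsRoundRobin (i : ℕ → Fin K) : Prop :=
  ∀ t (ht : t < K), i (t + 1) = ⟨t, ht⟩

lemma StartsRoundRobin.one_le_pullCount {i : ℕ → Fin K} (h : StartsRoundRobin i) (j : Fin K)
    {t : ℕ} (ht : K ≤ t) : 1 ≤ pullCount i j t :=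
  card_pos.2 ⟨j + 1, mem_filter.2 ⟨mem_Icc.2 ⟨by omega, by omega⟩, h j j.isLt⟩⟩

lemma StartsRoundRobin.pullCount_eq_zero {i : ℕ → Fin K} (h : StartsRoundRobin i) {t : ℕ}
    (ht : t < K) : pullCount i (i (t + 1)) t = 0 := by
  refine card_eq_zero.2 (filter_eq_empty_iff.2 fun s hs his => ?_)
  rw [mem_Icc] at hs
  obtain ⟨s, rfl⟩ := Nat.exists_eq_add_of_le' hs.1
  rw [h s (by omega), h t ht, Fin.mk.injEq] at his
  omega

noncomputable def empiricalMean (x : ℕ → ℝ) (s : ℕ) : ℝ := (∑ u ∈ range s, x u) / s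

lemma le_empiricalMean_iff {x : ℕ → ℝ} {s : ℕ} (hs : 0 < s) {c : ℝ} :
    c ≤ empiricalMean x s ↔ s * c ≤ ∑ u ∈ range s, x u := by
  rw [empiricalMean, le_div_iff₀ (by positivity), mul_comm]

noncomputable def ucbRadius (t s : ℕ) : ℝ := √(2 * log t / s)

noncomputable def ucbIndex (x : Fin K → ℕ → ℝ) (i : ℕ → Fin K) (t : ℕ) (j : Fin K) : ℝ :=
  empiricalMean (x j) (pullCount i j (t - 1)) + ucbRadius t (pullCount i j (t - 1))

/-- `i t` is the arm played at round `t ≥ 1`, and `x j u` the reward of the `(u + 1)`-th pull of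
arm `j`. -/
structure IsUCB1Run (x : Fin K → ℕ → ℝ) (i : ℕ → Fin K) : Prop where
  startsRoundRobin : StartsRoundRobin i
  ucbIndex_le : ∀ t, K < t → ∀ j, ucbIndex x i t j ≤ ucbIndex x i t (i t)

lemma two_mul_ucbRadius_le {Δ : ℝ} (hΔ : 0 < Δ) {t n s : ℕ} (ht : 0 < t) (htn : t ≤ n)
    (hs : 8 * log n / Δ ^ 2 ≤ s) : 2 * ucbRadius t s ≤ Δ := by
  suffices 2 * log t / s ≤ (Δ / 2) ^ 2 by
    have := sqrt_le_sqrt this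
    rw [sqrt_sq (by positivity)] at this
    rw [ucbRadius]
    linarith
  rcases (Nat.cast_nonneg (α := ℝ) s).eq_or_lt with hs0 | hs0
  · rw [← hs0, div_zero]
    positivity
  have hlog : log t ≤ log n := log_le_log (by positivity) (by exact_mod_cast htn)
  rw [div_le_iff₀ hs0]
  rw [div_le_iff₀ (by positivity)] at hs
  nlinarith

lemma exp_neg_two_mul_ucbRadius_sq {t s : ℕ} (ht : 0 < t) (hs : 0 < s) :
    exp (-(2 * s * ucbRadius t s ^ 2)) = 1 / (t : ℝ) ^ 4 := by
  have hlog : 0 ≤ log t := log_natCast_nonneg t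
  rw [ucbRadius, sq_sqrt (by positivity), one_div, ← exp_log (by positivity : (0 : ℝ) < t ^ 4),
    ← exp_neg, log_pow]
  congr 1
  field_simp
  push_cast
  ring

def DeviatesAt (x : Fin K → ℕ → ℝ) (m : Fin K → ℝ) (j jstar : Fin K) (t : ℕ) : Prop :=
  ∃ s ∈ Icc 1 (t - 1), empiricalMean (x jstar) s ≤ m jstar - ucbRadius t s ∨
    m j + ucbRadius t s ≤ empiricalMean (x j) s

lemma IsUCB1Run.deviatesAt {x : Fin K → ℕ → ℝ} {i : ℕ → Fin K} (h : IsUCB1Run x i)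
    (m : Fin K → ℝ) {j jstar : Fin K} (hgap : 0 < m jstar - m j) {t n : ℕ} (hKt : K < t)
    (htn : t ≤ n) (hit : i t = j)
    (hpulls : 8 * log n / (m jstar - m j) ^ 2 ≤ pullCount i j (t - 1)) :
    DeviatesAt x m j jstar t := by
  have hmem : ∀ k, pullCount i k (t - 1) ∈ Icc 1 (t - 1) := fun k =>
    mem_Icc.2 ⟨h.startsRoundRobin.one_le_pullCount k (by omega), pullCount_le i k _⟩
  -- Otherwise the index of `j` is below `m j + 2 * radius ≤ m jstar`, so below that of `jstar`.
  by_contra hdev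
  simp only [DeviatesAt, not_exists, not_and, not_or, not_le] at hdev
  have hbest := (hdev _ (hmem jstar)).1
  have hj := (hdev _ (hmem j)).2
  have hsel := h.ucbIndex_le t hKt jstar
  rw [hit] at hsel
  have hrad := two_mul_ucbRadius_le hgap (by omega) htn hpulls
  simp only [ucbIndex] at hsel
  linarith

open Classical in
lemma IsUCB1Run.pullCount_le {x : Fin K → ℕ → ℝ} {i : ℕ → Fin K} (h : IsUCB1Run x i)
    (m : Fin K → ℝ) {j jstar : Fin K} (hgap : 0 < m jstar - m j) (n : ℕ) :
    (pullCount i j n : ℝ) ≤ 8 * log n / (m jstar - m j) ^ 2 + 1 +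
      #{t ∈ Ioc K n | DeviatesAt x m j jstar t} := by
  set a := 8 * log n / (m jstar - m j) ^ 2
  have ha : 0 ≤ a := by have := log_natCast_nonneg n; positivity
  set L := ⌊a⌋₊ + 1
  have hsub : {t ∈ Icc 1 n | i t = j ∧ L ≤ pullCount i j (t - 1)} ⊆
      {t ∈ Ioc K n | DeviatesAt x m j jstar t} := by
    intro t ht
    obtain ⟨htn, hit, hLt⟩ := mem_filter.1 ht
    rw [mem_Icc] at htn
    have hKt : K < t := by
      by_contra! htK
      obtain ⟨t, rfl⟩ := Nat.exists_eq_add_of_le' htn.1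
      have := h.startsRoundRobin.pullCount_eq_zero (t := t) (by omega)
      rw [hit, Nat.add_sub_cancel] at *
      omega
    simp only [mem_filter, mem_Ioc]
    refine ⟨⟨hKt, htn.2⟩, h.deviatesAt m hgap hKt htn.2 hit ?_⟩
    exact (Nat.lt_floor_add_one a).le.trans (by exact_mod_cast hLt)
  calc (pullCount i j n : ℝ) ≤ L + #{t ∈ Icc 1 n | i t = j ∧ L ≤ pullCount i j (t - 1)} := by
        exact_mod_cast pullCount_le_add_card_filter i j n L
    _ ≤ a + 1 + #{t ∈ Ioc K n | DeviatesAt x m j jstar t} := by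
        gcongr
        push_cast [L]
        linarith [Nat.floor_le ha]

end UCB1

section Hoeffding

variable {Ω : Type*} [MeasurableSpace Ω] {P : Measure Ω} [IsProbabilityMeasure P]
  {Y : ℕ → Ω → ℝ} {m : ℝ}

lemma measureReal_add_le_empiricalMean_le (hmeas : ∀ u, Measurable (Y u))
    (hindep : iIndepFun Y P) (hrange : ∀ u ω, Y u ω ∈ Set.Icc (0 : ℝ) 1)
    (hmean : ∀ u, P[Y u] = m) {s : ℕ} (hs : 0 < s) {c : ℝ} (hc : 0 ≤ c) :
    P.real {ω | m + c ≤ empiricalMean (Y · ω) s} ≤ exp (-(2 * s * c ^ 2)) := by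
  have hset : {ω | m + c ≤ empiricalMean (Y · ω) s} =
      {ω | s * c ≤ ∑ u ∈ range s, (Y u ω - P[Y u])} := by
    ext ω
    simp only [Set.mem_ofPred_eq, le_empiricalMean_iff hs, hmean, sum_sub_distrib, sum_const,
      card_range, nsmul_eq_mul]
    constructor <;> intro <;> linarith
  have hcentered : iIndepFun (fun u ω => Y u ω - P[Y u]) P :=
    hindep.comp (fun u (y : ℝ) => y - ∫ ω, Y u ω ∂P) fun _ => measurable_id.sub_const _
  have hsubG : ∀ u < s, HasSubgaussianMGF (fun ω => Y u ω - P[Y u]) ((‖(1 : ℝ) - 0‖₊ / 2) ^ 2) P :=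
    fun u _ => hasSubgaussianMGF_of_mem_Icc (hmeas u).aemeasurable (ae_of_all _ (hrange u))
  rw [hset]
  refine (HasSubgaussianMGF.measure_sum_range_ge_le_of_iIndepFun hcentered hsubG
    (by positivity)).trans_eq ?_
  congr 1
  simp
  field_simp

lemma measureReal_empiricalMean_le_sub_le (hmeas : ∀ u, Measurable (Y u))
    (hindep : iIndepFun Y P) (hrange : ∀ u ω, Y u ω ∈ Set.Icc (0 : ℝ) 1)
    (hmean : ∀ u, P[Y u] = m) {s : ℕ} (hs : 0 < s) {c : ℝ} (hc : 0 ≤ c) :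
    P.real {ω | empiricalMean (Y · ω) s ≤ m - c} ≤ exp (-(2 * s * c ^ 2)) := by
  have hreflect : ∀ ω, empiricalMean (fun u => 1 - Y u ω) s = 1 - empiricalMean (Y · ω) s := by
    intro ω
    simp only [empiricalMean, sum_sub_distrib, sum_const, card_range, nsmul_eq_mul, mul_one]
    field_simp
  convert measureReal_add_le_empiricalMean_le (Y := fun u ω => 1 - Y u ω) (m := 1 - m)
    (fun u => measurable_const.sub (hmeas u))
    (hindep.comp (fun _ x => 1 - x) fun _ => by fun_prop)
    (fun u ω => ⟨by linarith [(hrange u ω).2], by linarith [(hrange u ω).1]⟩)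
    (fun u => by
      rw [integral_sub (integrable_const 1)
        (Integrable.of_mem_Icc 0 1 (hmeas u).aemeasurable (ae_of_all _ (hrange u))), hmean]
      simp) hs hc using 2
  ext ω
  simp only [Set.mem_ofPred_eq, hreflect]
  constructor <;> intro <;> linarith

end Hoeffding

section Expectation

variable {Ω : Type*} [MeasurableSpace Ω] {P : Measure Ω}

lemma measurable_empiricalMean {Y : ℕ → Ω → ℝ} (hY : ∀ u, Measurable (Y u)) (s : ℕ) :
    Measurable fun ω => empiricalMean (Y · ω) s := by
  simp only [empiricalMean]
  fun_prop

open Classical in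
lemma integral_le_add_sum_measureReal [IsProbabilityMeasure P] {f : Ω → ℝ} (hf : Integrable f P)
    (c : ℝ) {ι : Type*} (S : Finset ι) {E : ι → Set Ω} (hE : ∀ k ∈ S, MeasurableSet (E k))
    (h : ∀ ω, f ω ≤ c + #{k ∈ S | ω ∈ E k}) :
    ∫ ω, f ω ∂P ≤ c + ∑ k ∈ S, P.real (E k) := by
  have hcard : ∀ ω, (#{k ∈ S | ω ∈ E k} : ℝ) = ∑ k ∈ S, (E k).indicator 1 ω := by
    intro ω
    simp [Set.indicator_apply]
  have hind : ∀ k ∈ S, Integrable ((E k).indicator (1 : Ω → ℝ)) P :=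
    fun k hk => (integrable_const 1).indicator (hE k hk)
  calc ∫ ω, f ω ∂P ≤ ∫ ω, (c + ∑ k ∈ S, (E k).indicator 1 ω) ∂P :=
        integral_mono hf ((integrable_const c).add (integrable_finsetSum S hind))
          fun ω => (h ω).trans_eq (by rw [hcard])
    _ = c + ∑ k ∈ S, P.real (E k) := by
        rw [integral_add (integrable_const c) (integrable_finsetSum S hind),
          integral_finsetSum S hind, sum_congr rfl fun k hk => integral_indicator_one (hE k hk)]
        simp

variable {α : Type*} [DecidableEq α] [MeasurableSpace α] [MeasurableSingletonClass α]
  {I : ℕ → Ω → α}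

lemma measurable_pullCount (hI : ∀ t, Measurable (I t)) (j : α) (n : ℕ) :
    Measurable fun ω => pullCount (I · ω) j n := by
  simp only [pullCount, card_filter]
  exact Finset.measurable_sum _ fun s _ =>
    Measurable.ite (hI s (measurableSet_singleton j)) measurable_const measurable_const

lemma integrable_pullCount [IsFiniteMeasure P] (hI : ∀ t, Measurable (I t)) (j : α) (n : ℕ) :
    Integrable (fun ω => (pullCount (I · ω) j n : ℝ)) P :=
  .of_bound (measurable_from_top.comp (measurable_pullCount hI j n)).aestronglyMeasurable n
    (ae_of_all _ fun ω => by simpa using pullCount_le (I · ω) j n)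

end Expectation

lemma sum_two_div_sq_le (S : Finset ℕ) : ∑ t ∈ S, 2 / (t : ℝ) ^ 2 ≤ π ^ 2 / 3 := by
  calc ∑ t ∈ S, 2 / (t : ℝ) ^ 2 = ∑ t ∈ S, 2 * (1 / (t : ℝ) ^ 2) := by simp only [mul_one_div]
    _ ≤ 2 * (π ^ 2 / 6) := sum_le_hasSum S (fun _ _ => by positivity) (hasSum_zeta_two.mul_left 2)
    _ = π ^ 2 / 3 := by ring

lemma setOf_deviatesAt {Ω : Type*} {K : ℕ} (X : Fin K → ℕ → Ω → ℝ) (μ : Fin K → ℝ)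
    (j jstar : Fin K) (t : ℕ) :
    {ω | DeviatesAt (fun k u => X k u ω) μ j jstar t} = ⋃ s ∈ Icc 1 (t - 1),
      ({ω | empiricalMean (X jstar · ω) s ≤ μ jstar - ucbRadius t s} ∪
        {ω | μ j + ucbRadius t s ≤ empiricalMean (X j · ω) s}) := by
  ext ω
  simp [DeviatesAt]

section PerArm

variable {Ω : Type*} [MeasurableSpace Ω] {P : Measure Ω} [IsProbabilityMeasure P] {K : ℕ}
  {X : Fin K → ℕ → Ω → ℝ} {μ : Fin K → ℝ}

lemma measurableSet_setOf_deviatesAt (hXmeas : ∀ j u, Measurable (X j u)) (j jstar : Fin K)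
    (t : ℕ) : MeasurableSet {ω | DeviatesAt (fun k u => X k u ω) μ j jstar t} := by
  rw [setOf_deviatesAt]
  exact Finset.measurableSet_biUnion _ fun s _ =>
    (measurableSet_le (measurable_empiricalMean (hXmeas jstar) s) measurable_const).union
      (measurableSet_le measurable_const (measurable_empiricalMean (hXmeas j) s))

lemma measureReal_setOf_deviatesAt_le (hXmeas : ∀ j u, Measurable (X j u))
    (hXrange : ∀ j u ω, X j u ω ∈ Set.Icc (0 : ℝ) 1) (hXindep : ∀ j, iIndepFun (X j) P)
    (hmean : ∀ j u, P[X j u] = μ j) (j jstar : Fin K) {t : ℕ} (ht : 0 < t) :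
    P.real {ω | DeviatesAt (fun k u => X k u ω) μ j jstar t} ≤ 2 / (t : ℝ) ^ 2 := by
  have hs : ∀ s ∈ Icc 1 (t - 1), 0 < s := fun s hs => (mem_Icc.1 hs).1
  rw [setOf_deviatesAt]
  calc _ ≤ ∑ s ∈ Icc 1 (t - 1),
        (P.real {ω | empiricalMean (X jstar · ω) s ≤ μ jstar - ucbRadius t s} +
          P.real {ω | μ j + ucbRadius t s ≤ empiricalMean (X j · ω) s}) :=
        (measureReal_biUnion_finset_le _ _).trans (sum_le_sum fun s _ => measureReal_union_le _ _)
    _ ≤ ∑ s ∈ Icc 1 (t - 1), 2 / (t : ℝ) ^ 4 := by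
        refine sum_le_sum fun s hs' => ?_
        have hlow := measureReal_empiricalMean_le_sub_le (hXmeas jstar) (hXindep jstar)
          (hXrange jstar) (hmean jstar) (hs s hs') (c := ucbRadius t s) (sqrt_nonneg _)
        have hup := measureReal_add_le_empiricalMean_le (hXmeas j) (hXindep j) (hXrange j)
          (hmean j) (hs s hs') (c := ucbRadius t s) (sqrt_nonneg _)
        rw [exp_neg_two_mul_ucbRadius_sq ht (hs s hs')] at hlow hup
        exact (add_le_add hlow hup).trans_eq (by ring)
    _ ≤ 2 / (t : ℝ) ^ 2 := by
        have htsq : ((t - 1 : ℕ) : ℝ) ≤ (t : ℝ) ^ 2 := by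
          have : (1 : ℝ) ≤ t := by exact_mod_cast ht
          calc ((t - 1 : ℕ) : ℝ) ≤ t := by exact_mod_cast Nat.sub_le t 1
            _ ≤ (t : ℝ) ^ 2 := by nlinarith
        rw [sum_const, Nat.card_Icc, Nat.add_sub_cancel, nsmul_eq_mul]
        calc ((t - 1 : ℕ) : ℝ) * (2 / (t : ℝ) ^ 4) ≤ (t : ℝ) ^ 2 * (2 / (t : ℝ) ^ 4) := by gcongr
          _ = 2 / (t : ℝ) ^ 2 := by field_simp

theorem integral_pullCount_le_of_isUCB1Run (hXmeas : ∀ j u, Measurable (X j u))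
    (hXrange : ∀ j u ω, X j u ω ∈ Set.Icc (0 : ℝ) 1) (hXindep : ∀ j, iIndepFun (X j) P)
    (hmean : ∀ j u, P[X j u] = μ j) {I : ℕ → Ω → Fin K} (hImeas : ∀ t, Measurable (I t))
    (hrun : ∀ ω, IsUCB1Run (fun j u => X j u ω) (I · ω)) {j jstar : Fin K}
    (hgap : 0 < μ jstar - μ j) (n : ℕ) :
    ∫ ω, (pullCount (I · ω) j n : ℝ) ∂P ≤ 8 * log n / (μ jstar - μ j) ^ 2 + 1 + π ^ 2 / 3 := by
  calc ∫ ω, (pullCount (I · ω) j n : ℝ) ∂P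
      ≤ 8 * log n / (μ jstar - μ j) ^ 2 + 1 + ∑ t ∈ Ioc K n,
          P.real {ω | DeviatesAt (fun k u => X k u ω) μ j jstar t} := by
        exact integral_le_add_sum_measureReal (integrable_pullCount hImeas j n) _ _
          (fun t _ => measurableSet_setOf_deviatesAt hXmeas j jstar t)
          fun ω => (hrun ω).pullCount_le μ hgap n
    _ ≤ 8 * log n / (μ jstar - μ j) ^ 2 + 1 + ∑ t ∈ Ioc K n, 2 / (t : ℝ) ^ 2 := by
        gcongr with t ht
        exact measureReal_setOf_deviatesAt_le hXmeas hXrange hXindep hmean j jstar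
          (by have := (mem_Ioc.1 ht).1; omega)
    _ ≤ 8 * log n / (μ jstar - μ j) ^ 2 + 1 + π ^ 2 / 3 := by
        gcongr
        exact sum_two_div_sq_le _

theorem sum_gap_mul_integral_pullCount_le (hXmeas : ∀ j u, Measurable (X j u))
    (hXrange : ∀ j u ω, X j u ω ∈ Set.Icc (0 : ℝ) 1) (hXindep : ∀ j, iIndepFun (X j) P)
    (hmean : ∀ j u, P[X j u] = μ j) {I : ℕ → Ω → Fin K} (hImeas : ∀ t, Measurable (I t))
    (hrun : ∀ ω, IsUCB1Run (fun j u => X j u ω) (I · ω)) {jstar : Fin K}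
    (hbest : ∀ j, μ j ≤ μ jstar) (n : ℕ) :
    ∑ j, (μ jstar - μ j) * ∫ ω, (pullCount (I · ω) j n : ℝ) ∂P ≤
      ∑ j with 0 < μ jstar - μ j,
        (8 * log n / (μ jstar - μ j) + (1 + π ^ 2 / 3) * (μ jstar - μ j)) := by
  rw [← sum_filter_of_ne (p := fun j => 0 < μ jstar - μ j)]
  swap
  · exact fun j _ hj => (sub_nonneg.2 (hbest j)).lt_of_ne (left_ne_zero_of_mul hj).symm
  refine sum_le_sum fun j hj => ?_
  have hgap : 0 < μ jstar - μ j := (mem_filter.1 hj).2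
  calc (μ jstar - μ j) * ∫ ω, (pullCount (I · ω) j n : ℝ) ∂P
      ≤ (μ jstar - μ j) * (8 * log n / (μ jstar - μ j) ^ 2 + 1 + π ^ 2 / 3) := by
        gcongr
        exact integral_pullCount_le_of_isUCB1Run hXmeas hXrange hXindep hmean hImeas hrun hgap n
    _ = 8 * log n / (μ jstar - μ j) + (1 + π ^ 2 / 3) * (μ jstar - μ j) := by
        field_simp
        ring

end PerArm

lemma regret_eq_sum_gap_mul_integral_pullCount {Ω α : Type*} [MeasurableSpace Ω]
    {P : Measure Ω} [IsProbabilityMeasure P] [Fintype α] [DecidableEq α] [MeasurableSpace α]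
    [MeasurableSingletonClass α] {I : ℕ → Ω → α} (hI : ∀ t, Measurable (I t)) (μ : α → ℝ)
    (c : ℝ) (n : ℕ) :
    n * c - ∑ t ∈ Icc 1 n, ∫ ω, μ (I t ω) ∂P =
      ∑ j, (c - μ j) * ∫ ω, (pullCount (I · ω) j n : ℝ) ∂P := by
  have hint : ∀ t, Integrable (fun ω => μ (I t ω)) P :=
    fun t => Integrable.of_finite.comp_measurable (hI t)
  calc n * c - ∑ t ∈ Icc 1 n, ∫ ω, μ (I t ω) ∂P = ∫ ω, ∑ t ∈ Icc 1 n, (c - μ (I t ω)) ∂P := by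
        rw [integral_finsetSum (f := fun t ω => c - μ (I t ω)) _
          fun t _ => (integrable_const c).sub (hint t)]
        simp [integral_sub (integrable_const c) (hint _), sum_sub_distrib]
    _ = ∫ ω, ∑ j, (c - μ j) * (pullCount (I · ω) j n : ℝ) ∂P := by
        congr with ω
        exact sum_comp_eq_sum_mul_pullCount (I · ω) (fun j => c - μ j) n
    _ = ∑ j, (c - μ j) * ∫ ω, (pullCount (I · ω) j n : ℝ) ∂P := by
        rw [integral_finsetSum _ fun j _ => (integrable_pullCount hI j n).const_mul _]
        simp only [integral_const_mul]

lemma tendsto_div_natCast_of_le_mul_log_add {f : ℕ → ℝ} (a b : ℝ) (hf0 : ∀ n, 0 ≤ f n)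
    (hf : ∀ n, f n ≤ a * log n + b) : Tendsto (fun n => f n / n) atTop (nhds 0) := by
  have hlog : Tendsto (fun n : ℕ => log n / n) atTop (nhds 0) :=
    isLittleO_log_id_atTop.tendsto_div_nhds_zero.comp tendsto_natCast_atTop_atTop
  have hlim : Tendsto (fun n : ℕ => a * (log n / n) + b / n) atTop (nhds 0) := by
    simpa using (hlog.const_mul a).add (tendsto_const_div_atTop_nhds_zero_nat b)
  refine squeeze_zero (fun n => div_nonneg (hf0 n) n.cast_nonneg) (fun n => ?_) hlim
  rw [mul_div_assoc', ← add_div]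
  exact div_le_div_of_nonneg_right (hf n) n.cast_nonneg

/-- **UCB1 is asymptotically optimal.**
Consider a `K`-armed stochastic bandit whose arms have i.i.d. rewards in `[0,1]`
with means `μ 1, …, μ K`, optimal mean `μ* = max_j μ j`, and gaps `Δ j = μ* - μ j`.
Run the UCB1 policy: first play each arm once; then at each subsequent round `t`,
play an arm maximizing the index `x̄ j t + √(2 ln t / N j (t-1))`.  Then the
cumulative regret satisfies
`R n ≤ Σ_{j : Δ j > 0} (8 ln n / Δ j + (1 + π²/3)·Δ j)` for all `n ≥ K`, and
consequently `R n / n → 0` as `n → ∞`, i.e. UCB1 is asymptotically optimal. -/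
theorem ucb1_asymptotically_optimal
    {Ω : Type*} [MeasurableSpace Ω] (P : Measure Ω) [IsProbabilityMeasure P]
    (K : ℕ) (hK : 0 < K)
    -- rewards: `X j s` is the reward obtained from the `(s+1)`-th pull of arm `j`
    (X : Fin K → ℕ → Ω → ℝ) (μ : Fin K → ℝ)
    (hXmeas : ∀ j s, Measurable (X j s))
    (hXrange : ∀ j s ω, X j s ω ∈ Set.Icc (0 : ℝ) 1)
    (hXindep : iIndepFun
      (fun js : Fin K × ℕ => X js.1 js.2) P)
    (hXid : ∀ j s, P.map (X j s) = P.map (X j 0))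
    (hμ : ∀ j, μ j = ∫ ω, X j 0 ω ∂P)
    -- policy: `I t ω` is the arm played at round `t` (rounds are 1-indexed)
    (I : ℕ → Ω → Fin K) (hImeas : ∀ t, Measurable (I t))
    -- `N j t ω` : number of times arm `j` is played in rounds `1, …, t`
    (N : Fin K → ℕ → Ω → ℕ)
    (hN : ∀ j t ω, N j t ω = ((Finset.Icc 1 t).filter fun s => I s ω = j).card)
    -- `xbar j t ω` : empirical mean of arm `j` before round `t`
    (xbar : Fin K → ℕ → Ω → ℝ)
    (hxbar : ∀ j t ω,
      xbar j t ω = (∑ s ∈ Finset.range (N j (t - 1) ω), X j s ω) / (N j (t - 1) ω))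
    -- UCB1 initialization: play each arm once in rounds `1, …, K`
    (hInit : ∀ t ω, 1 ≤ t → (ht : t ≤ K) → I t ω = ⟨t - 1, by omega⟩)
    -- UCB1 selection: afterwards play an arm maximizing the UCB index
    (hUCB : ∀ t ω, K < t → ∀ j : Fin K,
      xbar j t ω + Real.sqrt (2 * Real.log t / (N j (t - 1) ω)) ≤
        xbar (I t ω) t ω + Real.sqrt (2 * Real.log t / (N (I t ω) (t - 1) ω)))
    (μstar : ℝ) (hμstar : μstar = ⨆ j, μ j)
    (Δ : Fin K → ℝ) (hΔ : ∀ j, Δ j = μstar - μ j)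
    -- cumulative regret
    (R : ℕ → ℝ)
    (hR : ∀ n : ℕ, R n = n * μstar - ∑ t ∈ Finset.Icc 1 n, ∫ ω, μ (I t ω) ∂P) :
    (∀ n : ℕ, K ≤ n →
      R n ≤ ∑ j ∈ Finset.univ.filter (fun j : Fin K => 0 < Δ j),
        (8 * Real.log n / Δ j + (1 + Real.pi ^ 2 / 3) * Δ j)) ∧
    Tendsto (fun n : ℕ => R n / n) atTop (nhds 0) := by
  have hmean : ∀ j u, P[X j u] = μ j := fun j u => by
    rw [hμ, (IdentDistrib.mk (hXmeas j u).aemeasurable (hXmeas j 0).aemeasurable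
      (hXid j u)).integral_eq]
  have hrun : ∀ ω, IsUCB1Run (fun j u => X j u ω) (I · ω) := fun ω =>
    { startsRoundRobin := fun t ht => Fin.ext (by simp [hInit (t + 1) ω (by omega) (by omega)])
      ucbIndex_le := fun t ht j => by
        simpa only [ucbIndex, empiricalMean, ucbRadius, pullCount, hxbar, hN] using hUCB t ω ht j }
  have : Nonempty (Fin K) := ⟨⟨0, hK⟩⟩
  obtain ⟨jstar, hjstar⟩ := exists_eq_ciSup_of_finite (f := μ)
  have hbest : ∀ j, μ j ≤ μ jstar := fun j => hjstar ▸ le_ciSup (Set.finite_range μ).bddAbove j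
  have hΔ' : ∀ j, Δ j = μ jstar - μ j := fun j => by rw [hΔ, hμstar, hjstar]
  have hregret : ∀ n : ℕ, R n = ∑ j, Δ j * ∫ ω, (pullCount (I · ω) j n : ℝ) ∂P := fun n => by
    simp_rw [hR, regret_eq_sum_gap_mul_integral_pullCount hImeas, hΔ]
  have hbound : ∀ n : ℕ, R n ≤ ∑ j ∈ Finset.univ.filter (fun j : Fin K => 0 < Δ j),
      (8 * Real.log n / Δ j + (1 + Real.pi ^ 2 / 3) * Δ j) := fun n => by
    simp_rw [hregret, hΔ']
    exact sum_gap_mul_integral_pullCount_le hXmeas hXrange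
      (fun j => hXindep.precomp (g := Prod.mk j) (Prod.mk_right_injective j)) hmean hImeas hrun
      hbest n
  refine ⟨fun n _ => hbound n, tendsto_div_natCast_of_le_mul_log_add
    (∑ j ∈ Finset.univ.filter (fun j : Fin K => 0 < Δ j), 8 / Δ j)
    (∑ j ∈ Finset.univ.filter (fun j : Fin K => 0 < Δ j), (1 + Real.pi ^ 2 / 3) * Δ j)
    (fun n => ?_) fun n => (hbound n).trans_eq ?_⟩
  · rw [hregret]
    exact sum_nonneg fun j _ =>
      mul_nonneg (by rw [hΔ']; linarith [hbest j]) (integral_nonneg fun ω => by positivity)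
  · rw [sum_mul, ← sum_add_distrib]
    simp only [div_mul_eq_mul_div]
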